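/- For all t,s>0 and all θ₁,θ₃∈ℝ, ∫_0^{2π} p_t(θ₁,θ₂)·p_s(θ₂,θ₃) dθ₂ = p_{t+s}(θ₁,θ₃) (the Chapman–Kolmogorov identity for the heat kernel on the circle). -/

import Mathlib

/-!
With `g_t(x) = exp (-x² / (2t))`, `villainF t` is the `2π`-periodization of `g_t`. Since
`θ₂ ↦ villainF s (θ₂ - θ₃)` is `2π`-periodic, the integral over one period of
`villainF t (θ₁ - θ₂) * villainF s (θ₂ - θ₃)` unfolds to the integral over `ℝ` of
`g_t (θ₂ - θ₁) * villainF s (θ₂ - θ₃)`. Expanding `villainF s` and integrating term by term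
reduces everything to the Gaussian convolution identity
`∫ g_t (u - a) g_s (u - b) du = √(2πts / (t + s)) g_{t+s} (a - b)`, proved by completing the
square; the normalizing constants then combine to `(2π(t + s))^{-1/2}`.
-/

open Real

/-- The heat kernel `f_t` on the circle `ℝ/2πℤ` (up to the factor `(2πt)^{-1/2}`). -/
noncomputable def villainF (t x : ℝ) : ℝ :=
  ∑' n : ℤ, Real.exp (-(x + 2 * π * n) ^ 2 / (2 * t))

/-- The transition kernel `p_t` of Brownian motion on the circle `ℝ/2πℤ`. -/
noncomputable def circleHeatKernel (t θ₁ θ₂ : ℝ) : ℝ :=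
  (2 * π * t) ^ (-(1 / 2 : ℝ)) * villainF t (θ₁ - θ₂)

open MeasureTheory Function

theorem MeasureTheory.Integrable.hasSum_intervalIntegral_comp_add_int_mul {E : Type*}
    [NormedAddCommGroup E] [NormedSpace ℝ E] {f : ℝ → E} (hf : Integrable f) {T : ℝ}
    (hT : 0 < T) : HasSum (fun n : ℤ => ∫ x in (0 : ℝ)..T, f (x + n * T)) (∫ x, f x) := by
  have hterm (n : ℤ) :
      ∫ x in (0 : ℝ)..T, f (x + n * T) = T • ∫ y in (0 : ℝ)..1, f ((y + n) * T) := by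
    simp_rw [add_mul]
    rw [intervalIntegral.integral_comp_mul_right (fun x => f (x + n * T)) hT.ne', smul_smul,
      mul_inv_cancel₀ hT.ne', one_smul, zero_mul, one_mul]
  have h := ((hf.comp_mul_right' hT.ne').hasSum_intervalIntegral_comp_add_int).const_smul T
  rwa [Measure.integral_comp_mul_right, smul_smul, abs_inv, abs_of_pos hT,
    mul_inv_cancel₀ hT.ne', one_smul, ← funext hterm] at h

theorem intervalIntegral_tsum_comp_add_int_mul_mul_periodic {f h : ℝ → ℝ} {T : ℝ}
    (hT : 0 < T) (hh : Periodic h T) (hfh : Integrable fun x => f x * h x) :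
    ∫ x in (0 : ℝ)..T, (∑' n : ℤ, f (x + n * T)) * h x = ∫ x, f x * h x := by
  have hshift (n : ℤ) (x : ℝ) : f (x + n * T) * h x = f (x + n * T) * h (x + n * T) := by
    rw [hh.int_mul n x]
  have hnorm := (hfh.norm.hasSum_intervalIntegral_comp_add_int_mul hT).summable
  simp_rw [← tsum_mul_right, hshift,
    ← (hfh.hasSum_intervalIntegral_comp_add_int_mul hT).tsum_eq,
    intervalIntegral.integral_of_le hT.le] at hnorm ⊢
  exact (integral_tsum_of_summable_integral_norm
    (fun n : ℤ => (hfh.comp_add_right (n * T)).integrableOn) hnorm).symm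

noncomputable def heatGaussian (t x : ℝ) : ℝ :=
  Real.exp (-x ^ 2 / (2 * t))

lemma villainF_eq_tsum (t x : ℝ) :
    villainF t x = ∑' n : ℤ, heatGaussian t (x + 2 * π * n) := rfl

lemma heatGaussian_nonneg (t x : ℝ) : 0 ≤ heatGaussian t x := (Real.exp_pos _).le

lemma heatGaussian_add_two_pi_mul_le {t : ℝ} (ht : 0 < t) (x : ℝ) (n : ℤ) :
    heatGaussian t (x + 2 * π * n)
      ≤ Real.exp (x ^ 2 / (2 * t)) * Real.exp (-(π ^ 2 / t)) ^ n.natAbs := by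
  have hn : (n.natAbs : ℝ) ≤ (n : ℝ) ^ 2 := by
    rw [Nat.cast_natAbs]; exact_mod_cast Int.natAbs_le_self_sq n
  have hsq : 2 * π ^ 2 * n.natAbs - x ^ 2 ≤ (x + 2 * π * n) ^ 2 := by
    nlinarith [sq_nonneg (x + π * n), mul_le_mul_of_nonneg_left hn (sq_nonneg π)]
  rw [heatGaussian, ← Real.exp_nat_mul, ← Real.exp_add, Real.exp_le_exp]
  calc -(x + 2 * π * n) ^ 2 / (2 * t) ≤ -(2 * π ^ 2 * n.natAbs - x ^ 2) / (2 * t) := by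
        gcongr
    _ = x ^ 2 / (2 * t) + n.natAbs * -(π ^ 2 / t) := by field_simp; ring

lemma summable_heatGaussian_add_two_pi_mul {t : ℝ} (ht : 0 < t) (x : ℝ) :
    Summable fun n : ℤ => heatGaussian t (x + 2 * π * n) := by
  have hr : Real.exp (-(π ^ 2 / t)) < 1 := Real.exp_lt_one_iff.mpr (by simp; positivity)
  have hgeom : Summable fun n : ℤ => Real.exp (-(π ^ 2 / t)) ^ n.natAbs := by
    apply Summable.of_nat_of_neg <;> simpa using summable_geometric_of_lt_one (by positivity) hr
  exact .of_nonneg_of_le (fun n => heatGaussian_nonneg _ _)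
    (heatGaussian_add_two_pi_mul_le ht x) (hgeom.mul_left _)

lemma villainF_pos {t : ℝ} (ht : 0 < t) (x : ℝ) : 0 < villainF t x :=
  (summable_heatGaussian_add_two_pi_mul ht x).tsum_pos (fun _ => heatGaussian_nonneg _ _) 0
    (Real.exp_pos _)

lemma villainF_neg (t x : ℝ) : villainF t (-x) = villainF t x := by
  rw [villainF, ← (Equiv.neg ℤ).tsum_eq]
  refine tsum_congr fun n => ?_
  simp only [Equiv.neg_apply, Int.cast_neg]
  ring_nf

lemma villainF_periodic (t : ℝ) : Periodic (villainF t) (2 * π) := by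
  intro x
  rw [villainF, ← (Equiv.subRight (1 : ℤ)).tsum_eq]
  refine tsum_congr fun n => ?_
  simp only [Equiv.subRight_apply, Int.cast_sub, Int.cast_one]
  ring_nf

lemma integral_heatGaussian_mul_heatGaussian {t s : ℝ} (ht : 0 < t) (hs : 0 < s) (a b : ℝ) :
    ∫ u, heatGaussian t (u - a) * heatGaussian s (u - b)
      = √(2 * π * t * s / (t + s)) * heatGaussian (t + s) (a - b) := by
  have hts : 0 < t + s := by linarith
  have complete_square : ∀ u, heatGaussian t (u - a) * heatGaussian s (u - b)
      = Real.exp (-((t + s) / (2 * t * s)) * (u - (s * a + t * b) / (t + s)) ^ 2)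
        * heatGaussian (t + s) (a - b) := by
    intro u
    simp only [heatGaussian, ← Real.exp_add]
    congr 1
    field_simp
    ring
  simp_rw [complete_square]
  rw [integral_mul_const, integral_sub_right_eq_self
    (fun u => Real.exp (-((t + s) / (2 * t * s)) * u ^ 2)), integral_gaussian]
  congr 2
  field_simp

lemma integrable_heatGaussian_mul_heatGaussian {t s : ℝ} (ht : 0 < t) (hs : 0 < s) (a b : ℝ) :
    Integrable fun u => heatGaussian t (u - a) * heatGaussian s (u - b) :=
  .of_integral_ne_zero <| by
    rw [integral_heatGaussian_mul_heatGaussian ht hs]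
    unfold heatGaussian
    positivity

lemma integral_heatGaussian_mul_villainF {t s : ℝ} (ht : 0 < t) (hs : 0 < s) (a b : ℝ) :
    ∫ u, heatGaussian t (u - a) * villainF s (u - b)
      = √(2 * π * t * s / (t + s)) * villainF (t + s) (a - b) := by
  have hterm : ∀ n : ℤ, ∫ u, heatGaussian t (u - a) * heatGaussian s (u - (b - 2 * π * n))
      = √(2 * π * t * s / (t + s)) * heatGaussian (t + s) (a - b + 2 * π * n) := fun n => by
    rw [integral_heatGaussian_mul_heatGaussian ht hs, sub_sub_eq_add_sub, add_sub_right_comm]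
  simp_rw [villainF_eq_tsum, ← tsum_mul_left, ← hterm, sub_add]
  exact (integral_tsum_of_summable_integral_norm
    (fun n => integrable_heatGaussian_mul_heatGaussian ht hs _ _)
    (by simpa only [norm_mul, Real.norm_of_nonneg (heatGaussian_nonneg _ _), hterm] using
      (summable_heatGaussian_add_two_pi_mul (by linarith) (a - b)).mul_left _)).symm

lemma intervalIntegral_villainF_mul_villainF {t s : ℝ} (ht : 0 < t) (hs : 0 < s) (θ₁ θ₃ : ℝ) :
    ∫ θ₂ in (0 : ℝ)..(2 * π), villainF t (θ₁ - θ₂) * villainF s (θ₂ - θ₃)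
      = √(2 * π * t * s / (t + s)) * villainF (t + s) (θ₁ - θ₃) := by
  have hperiodize (θ₂ : ℝ) :
      villainF t (θ₁ - θ₂) = ∑' n : ℤ, heatGaussian t (θ₂ + n * (2 * π) - θ₁) := by
    rw [← villainF_neg, neg_sub, villainF_eq_tsum]
    exact tsum_congr fun n => by ring_nf
  have hint : Integrable fun u => heatGaussian t (u - θ₁) * villainF s (u - θ₃) :=
    .of_integral_ne_zero <| by
      rw [integral_heatGaussian_mul_villainF ht hs]
      exact (mul_pos (by positivity) (villainF_pos (by linarith) _)).ne'
  simp_rw [hperiodize]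
  rw [intervalIntegral_tsum_comp_add_int_mul_mul_periodic
    (f := fun u => heatGaussian t (u - θ₁)) two_pi_pos ((villainF_periodic s).sub_const θ₃) hint,
    integral_heatGaussian_mul_villainF ht hs]

lemma rpow_neg_half_mul_rpow_neg_half_mul_sqrt {t s : ℝ} (ht : 0 < t) (hs : 0 < s) :
    (2 * π * t) ^ (-(1 / 2 : ℝ)) * (2 * π * s) ^ (-(1 / 2 : ℝ)) * √(2 * π * t * s / (t + s))
      = (2 * π * (t + s)) ^ (-(1 / 2 : ℝ)) := by
  have hts : 0 < t + s := by linarith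
  rw [rpow_neg (by positivity), rpow_neg (by positivity), rpow_neg (by positivity),
    ← sqrt_eq_rpow, ← sqrt_eq_rpow, ← sqrt_eq_rpow, ← sqrt_inv, ← sqrt_inv, ← sqrt_inv,
    ← sqrt_mul (by positivity), ← sqrt_mul (by positivity)]
  congr 1
  field_simp

/-- Chapman–Kolmogorov identity for the heat kernel on the
circle: for `t, s > 0` and `θ₁, θ₃ ∈ ℝ`,
`∫_0^{2π} p_t(θ₁,θ₂) p_s(θ₂,θ₃) dθ₂ = p_{t+s}(θ₁,θ₃)`. -/
theorem statement_6 (t s : ℝ) (ht : 0 < t) (hs : 0 < s) (θ₁ θ₃ : ℝ) :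
    (∫ θ₂ in (0 : ℝ)..(2 * π), circleHeatKernel t θ₁ θ₂ * circleHeatKernel s θ₂ θ₃)
      = circleHeatKernel (t + s) θ₁ θ₃ := by
  unfold circleHeatKernel
  conv_lhs => enter [1, θ₂]; rw [mul_mul_mul_comm]
  rw [intervalIntegral.integral_const_mul, intervalIntegral_villainF_mul_villainF ht hs,
    ← mul_assoc, rpow_neg_half_mul_rpow_neg_half_mul_sqrt ht hs]
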